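/- Let ℓ be a 2-dimensional real subspace of ℂ³ ⊂ ℝ⁷. Then the 3-dimensional subspace ℝe₁ ⊕ ℓ of ℝ⁷ admits an orthonormal basis (w₁, w₂, w₃) with φ₀(w₁, w₂, w₃) = 1 (i.e. is an associative 3-plane) if and only if ℓ is a complex line, i.e. iℓ = ℓ. -/

import Mathlib

open scoped RealInnerProductSpace

noncomputable section

abbrev E7 : Type := EuclideanSpace ℝ (Fin 7)

/-- `dxⁱ ∧ dxʲ ∧ dxᵏ` evaluated on the triple `(u, v, w)`. -/
def triDet (u v w : E7) (i j k : Fin 7) : ℝ :=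
  Matrix.det !![u i, u j, u k; v i, v j, v k; w i, w j, w k]

/-- The standard G₂ 3-form `φ₀ = dx¹²³ + dx¹⁴⁵ + dx¹⁶⁷ + dx²⁴⁶ − dx²⁵⁷ − dx³⁴⁷ − dx³⁵⁶`
(here with 0-indexed coordinates). -/
def phi0 (u v w : E7) : ℝ :=
  triDet u v w 0 1 2 + triDet u v w 0 3 4 + triDet u v w 0 5 6 +
    triDet u v w 1 3 5 - triDet u v w 1 4 6 - triDet u v w 2 3 6 - triDet u v w 2 4 5

/-- `ℂ³` with its standard Hermitian inner product. -/
abbrev C3 : Type := EuclideanSpace ℂ (Fin 3)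

/-- The inclusion `ℂ³ ⊂ ℝ⁷ = ℝ ⊕ ℂ³` given by the complex coordinates
`z¹ = x² + ix³`, `z² = x⁴ + ix⁵`, `z³ = x⁶ + ix⁷` (0-indexed: `e₁` is index 0). -/
def toR7 (z : C3) : E7 :=
  (WithLp.equiv 2 (Fin 7 → ℝ)).symm
    ![0, (z 0).re, (z 0).im, (z 1).re, (z 1).im, (z 2).re, (z 2).im]

/-- The basis vector `e₁` spanning the `ℝ` factor of `ℝ⁷ = ℝ ⊕ ℂ³`. -/
def E1 : E7 := EuclideanSpace.single 0 1

/-- The standard Kähler form `ω₀(u, v) = g₀(iu, v)` on `ℂ³`, `g₀ = Re⟨·,·⟩`. -/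
def omegaC3 (u v : C3) : ℝ := (inner ℂ (Complex.I • u) v : ℂ).re

/-- The standard complex volume form `Ω₀ = dz¹∧dz²∧dz³` on `ℂ³`: the determinant of
the complex 3×3 matrix with columns `v₁, v₂, v₃`. -/
def OmegaC3 (v₁ v₂ v₃ : C3) : ℂ :=
  Matrix.det !![v₁ 0, v₂ 0, v₃ 0; v₁ 1, v₂ 1, v₃ 1; v₁ 2, v₂ 2, v₃ 2]

/-- A 3-dimensional subspace of `ℝ⁷` is an associative 3-plane if it admits an
orthonormal basis `(w₁, w₂, w₃)` with `φ₀(w₁, w₂, w₃) = 1`. -/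
def IsAssociativePlane (π : Submodule ℝ E7) : Prop :=
  ∃ w₁ w₂ w₃ : E7, ‖w₁‖ = 1 ∧ ‖w₂‖ = 1 ∧ ‖w₃‖ = 1 ∧
    ⟪w₁, w₂⟫ = 0 ∧ ⟪w₁, w₃⟫ = 0 ∧ ⟪w₂, w₃⟫ = 0 ∧
    Submodule.span ℝ ({w₁, w₂, w₃} : Set E7) = π ∧ phi0 w₁ w₂ w₃ = 1

/-- Multiplication by `i` on `ℂ³` as an `ℝ`-linear map. -/
def mulI : C3 →ₗ[ℝ] C3 :=
  LinearMap.restrictScalars ℝ (Complex.I • (LinearMap.id : C3 →ₗ[ℂ] C3))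


/-!
Let `(u, v)` be an orthonormal basis of `ℓ`. Then `(e₁, u, v)` is an orthonormal basis of
`ℝe₁ ⊕ ℓ` and `φ₀(e₁, u, v) = ω₀(u, v) = ⟨iu, v⟩`. Restricted to a 3-plane, the alternating
form `φ₀` is a multiple of the volume form, so on any other orthonormal basis of the plane it
takes the value `±⟨iu, v⟩`. Hence the plane is associative iff `⟨iu, v⟩ = ±1`, i.e. (equality in
Cauchy–Schwarz) `iu = ±v`, which is the case iff `ℓ = span {u, iu}` is a complex line.
-/

open Submodule Set

section Orthonormal

variable {E : Type*} [NormedAddCommGroup E] [InnerProductSpace ℝ E]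

theorem orthonormal_pair_iff {x y : E} :
    Orthonormal ℝ ![x, y] ↔ ‖x‖ = 1 ∧ ‖y‖ = 1 ∧ ⟪x, y⟫ = 0 := by
  simp only [orthonormal_vecCons_iff, Matrix.cons_val_fin_one, forall_const,
    orthonormal_subsingleton_iff]
  tauto

theorem orthonormal_triple_iff {x y z : E} :
    Orthonormal ℝ ![x, y, z] ↔
      ‖x‖ = 1 ∧ ‖y‖ = 1 ∧ ‖z‖ = 1 ∧ ⟪x, y⟫ = 0 ∧ ⟪x, z⟫ = 0 ∧ ⟪y, z⟫ = 0 := by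
  simp only [orthonormal_vecCons_iff, Fin.forall_fin_two, Matrix.cons_val_zero,
    Matrix.cons_val_one, Matrix.cons_val_fin_one, forall_const, orthonormal_subsingleton_iff]
  tauto

theorem Submodule.exists_orthonormal_pair_span_eq (K : Submodule ℝ E)
    (hK : Module.finrank ℝ K = 2) :
    ∃ u v : E, Orthonormal ℝ ![u, v] ∧ span ℝ {u, v} = K := by
  have : FiniteDimensional ℝ K := .of_finrank_pos (by omega)
  let b := (stdOrthonormalBasis ℝ K).reindex (finCongr hK)
  have hb : K.subtype ∘ b = ![(b 0 : E), b 1] := by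
    ext i; fin_cases i <;> rfl
  refine ⟨b 0, b 1, hb ▸ b.orthonormal.comp_linearIsometry K.subtypeₗᵢ, ?_⟩
  rw [← Matrix.range_cons_cons_empty, ← hb, range_comp, ← map_span, ← b.coe_toBasis,
    b.toBasis.span_eq, map_subtype_top]

theorem AlternatingMap.apply_eq_or_eq_neg_of_orthonormal {ι : Type*} [Fintype ι] [DecidableEq ι]
    (f : E [⋀^ι]→ₗ[ℝ] ℝ) {v w : ι → E} (hv : Orthonormal ℝ v) (hw : Orthonormal ℝ w)
    (hvw : span ℝ (range v) = span ℝ (range w)) : f w = f v ∨ f w = -f v := by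
  set K := span ℝ (range v)
  have hbasis : ∀ u : ι → E, Orthonormal ℝ u → span ℝ (range u) = K →
      ∃ b : OrthonormalBasis ι ℝ K, K.subtype ∘ b = u := by
    intro u hu huK
    have hmem : ∀ i, u i ∈ K := fun i => huK ▸ subset_span (mem_range_self i)
    have hspan : ⊤ ≤ span ℝ (range (Set.codRestrict u K hmem)) := by
      rw [← map_le_map_iff_of_injective K.injective_subtype, map_span, ← range_comp,
        map_subtype_top]
      exact huK.ge
    exact ⟨OrthonormalBasis.mk (hu.codRestrict K hmem) hspan, by ext; simp⟩
  obtain ⟨a, ha⟩ := hbasis v hv rfl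
  obtain ⟨b, hb⟩ := hbasis w hw hvw.symm
  have hdet : f (K.subtype ∘ b) = f (K.subtype ∘ a) * a.toBasis.det b :=
    congr($((f.compLinearMap K.subtype).eq_smul_basis_det a.toBasis) b)
  rw [← ha, ← hb, hdet]
  rcases a.det_to_matrix_orthonormalBasis_real b with h | h <;> simp [h]

end Orthonormal

def triDetForm (i j k : Fin 7) : E7 [⋀^Fin 3]→ₗ[ℝ] ℝ :=
  Matrix.detRowAlternating.compLinearMap
    (LinearMap.pi fun c => (EuclideanSpace.proj (𝕜 := ℝ) (![i, j, k] c)).toLinearMap)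

theorem triDetForm_apply (u v w : E7) (i j k : Fin 7) :
    triDetForm i j k ![u, v, w] = triDet u v w i j k := by
  simp only [triDetForm, triDet, AlternatingMap.compLinearMap_apply]
  congr 1
  ext r c
  fin_cases r <;> fin_cases c <;> rfl

def phi0Form : E7 [⋀^Fin 3]→ₗ[ℝ] ℝ :=
  triDetForm 0 1 2 + triDetForm 0 3 4 + triDetForm 0 5 6 +
    triDetForm 1 3 5 - triDetForm 1 4 6 - triDetForm 2 3 6 - triDetForm 2 4 5

theorem phi0Form_apply (u v w : E7) : phi0Form ![u, v, w] = phi0 u v w := by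
  simp only [phi0Form, phi0, AlternatingMap.add_apply, AlternatingMap.sub_apply,
    triDetForm_apply]

theorem isAssociativePlane_iff (π : Submodule ℝ E7) :
    IsAssociativePlane π ↔
      ∃ w : Fin 3 → E7, Orthonormal ℝ w ∧ span ℝ (range w) = π ∧ phi0Form w = 1 := by
  constructor
  · rintro ⟨w₁, w₂, w₃, h₁, h₂, h₃, h₁₂, h₁₃, h₂₃, hspan, hφ⟩
    refine ⟨![w₁, w₂, w₃], orthonormal_triple_iff.mpr ⟨h₁, h₂, h₃, h₁₂, h₁₃, h₂₃⟩, ?_, ?_⟩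
    · rwa [Matrix.range_cons, Matrix.range_cons_cons_empty, singleton_union]
    · rwa [phi0Form_apply]
  · rintro ⟨w, hw, hspan, hφ⟩
    have hw3 : ![w 0, w 1, w 2] = w := by ext i; fin_cases i <;> rfl
    rw [← hw3] at hw hspan hφ
    rw [Matrix.range_cons, Matrix.range_cons_cons_empty, singleton_union] at hspan
    rw [phi0Form_apply] at hφ
    obtain ⟨h₁, h₂, h₃, h₁₂, h₁₃, h₂₃⟩ := orthonormal_triple_iff.mp hw
    exact ⟨w 0, w 1, w 2, h₁, h₂, h₃, h₁₂, h₁₃, h₂₃, hspan, hφ⟩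

def toR7L : C3 →ₗ[ℝ] E7 where
  toFun := toR7
  map_add' a b := by ext i; fin_cases i <;> simp [toR7]
  map_smul' c a := by ext i; fin_cases i <;> simp [toR7]

theorem real_inner_C3_eq_re (a b : C3) : ⟪a, b⟫ = (inner ℂ a b).re := rfl

theorem inner_toR7 (a b : C3) : ⟪toR7 a, toR7 b⟫ = ⟪a, b⟫ := by
  simp only [toR7, WithLp.equiv_symm_apply, PiLp.inner_apply, RCLike.inner_apply,
    Real.ringHom_apply, Fin.sum_univ_seven, Fin.sum_univ_three, Matrix.cons_val_zero,
    Matrix.cons_val_one, Matrix.cons_val, Complex.inner, Complex.mul_re, Complex.conj_re,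
    Complex.conj_im]
  ring

theorem norm_toR7 (a : C3) : ‖toR7 a‖ = ‖a‖ := by
  rw [norm_eq_sqrt_real_inner, norm_eq_sqrt_real_inner (F := C3), inner_toR7]

theorem inner_E1_toR7 (a : C3) : ⟪E1, toR7 a⟫ = 0 := by
  simp [E1, toR7, EuclideanSpace.inner_single_left]

theorem norm_E1 : ‖E1‖ = 1 := by simp [E1]

theorem phi0_E1_toR7 (a b : C3) : phi0 E1 (toR7 a) (toR7 b) = omegaC3 a b := by
  simp only [phi0, triDet, E1, Fin.isValue, PiLp.single_eq_same, ne_eq, one_ne_zero,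
    not_false_eq_true, PiLp.single_eq_of_ne, Fin.reduceEq, toR7, WithLp.equiv_symm_apply,
    Matrix.cons_val_zero, Matrix.cons_val_one, Matrix.cons_val, Matrix.det_fin_three,
    Matrix.of_apply, Matrix.cons_val', Matrix.cons_val_fin_one, one_mul, mul_zero, zero_mul,
    sub_zero, add_zero, sub_self, omegaC3, CStarModule.inner_op_smul_left, PiLp.inner_apply,
    RCLike.inner_apply, Fin.sum_univ_three, RCLike.star_def, Complex.conj_I, mul_neg,
    Complex.neg_re, Complex.mul_re, Complex.add_re, Complex.conj_re, Complex.conj_im,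
    sub_neg_eq_add, Complex.I_re, Complex.add_im, Complex.mul_im, Complex.I_im, mul_one, zero_sub,
    neg_add_rev, neg_neg]
  ring

theorem omegaC3_eq_inner (a b : C3) : omegaC3 a b = ⟪Complex.I • a, b⟫ := rfl

theorem span_insert_E1_image {ℓ : Submodule ℝ C3} {u v : C3} (h : span ℝ {u, v} = ℓ) :
    span ℝ (insert E1 (toR7 '' ℓ)) = span ℝ (range ![E1, toR7 u, toR7 v]) := by
  have himage : toR7 '' ℓ = map toR7L ℓ := rfl
  rw [Matrix.range_cons, Matrix.range_cons_cons_empty, singleton_union, span_insert, himage,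
    span_eq, ← h, map_span, image_pair, ← span_insert]
  rfl

theorem orthonormal_E1_toR7 {u v : C3} (h : Orthonormal ℝ ![u, v]) :
    Orthonormal ℝ ![E1, toR7 u, toR7 v] := by
  obtain ⟨hu, hv, huv⟩ := orthonormal_pair_iff.mp h
  rw [orthonormal_triple_iff, norm_toR7, norm_toR7, inner_toR7]
  exact ⟨norm_E1, hu, hv, inner_E1_toR7 u, inner_E1_toR7 v, huv⟩

theorem phi0Form_E1_toR7 (u v : C3) :
    phi0Form ![E1, toR7 u, toR7 v] = ⟪Complex.I • u, v⟫ := by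
  rw [phi0Form_apply, phi0_E1_toR7, omegaC3_eq_inner]

theorem norm_I_smul (u : C3) : ‖Complex.I • u‖ = ‖u‖ := by
  rw [norm_smul, Complex.norm_I, one_mul]

theorem orthonormal_pair_I_smul {u : C3} (hu : ‖u‖ = 1) : Orthonormal ℝ ![u, Complex.I • u] := by
  refine orthonormal_pair_iff.mpr ⟨hu, by rw [norm_I_smul, hu], ?_⟩
  rw [real_inner_C3_eq_re, inner_smul_right, inner_self_eq_norm_sq_to_K]
  simp [← Complex.ofReal_pow]

theorem map_mulI_eq_self_iff (ℓ : Submodule ℝ C3) :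
    map mulI ℓ = ℓ ↔ ∀ x ∈ ℓ, Complex.I • x ∈ ℓ := by
  refine ⟨fun h x hx => h ▸ mem_map_of_mem hx, fun h => le_antisymm ?_ fun x hx => ?_⟩
  · rintro _ ⟨x, hx, rfl⟩
    exact h x hx
  · refine ⟨-(Complex.I • x), neg_mem (h x hx), ?_⟩
    rw [map_neg, mulI, LinearMap.restrictScalars_apply, LinearMap.smul_apply, LinearMap.id_apply,
      smul_smul, Complex.I_mul_I, neg_one_smul, neg_neg]

theorem I_smul_mem_span_pair_I_smul {u x : C3} (hx : x ∈ span ℝ {u, Complex.I • u}) :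
    Complex.I • x ∈ span ℝ {u, Complex.I • u} := by
  obtain ⟨a, b, rfl⟩ := mem_span_pair.mp hx
  refine mem_span_pair.mpr ⟨-b, a, ?_⟩
  rw [smul_add, smul_comm Complex.I a, smul_comm Complex.I b, smul_smul Complex.I Complex.I,
    Complex.I_mul_I, neg_one_smul, smul_neg, neg_smul, add_comm]

theorem span_pair_I_smul_eq {ℓ : Submodule ℝ C3} (hdim : Module.finrank ℝ ℓ = 2) {u : C3}
    (hu : u ∈ ℓ) (hu₁ : ‖u‖ = 1) (hIu : Complex.I • u ∈ ℓ) : span ℝ {u, Complex.I • u} = ℓ := by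
  have : FiniteDimensional ℝ ℓ := .of_finrank_pos (by omega)
  refine eq_of_le_of_finrank_le (span_le.mpr (pair_subset hu hIu)) ?_
  rw [hdim, ← Matrix.range_cons_cons_empty u (Complex.I • u) ![],
    finrank_span_eq_card (orthonormal_pair_I_smul hu₁).linearIndependent, Fintype.card_fin]

/-- For a 2-dimensional real subspace `ℓ ⊆ ℂ³ ⊂ ℝ⁷`, the 3-plane `ℝe₁ ⊕ ℓ` is
associative if and only if `ℓ` is a complex line, i.e. `iℓ = ℓ`. -/
theorem statement8 (ℓ : Submodule ℝ C3) (hdim : Module.finrank ℝ ℓ = 2) :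
    IsAssociativePlane (Submodule.span ℝ (insert E1 (toR7 '' (ℓ : Set C3)))) ↔
      Submodule.map mulI ℓ = ℓ := by
  obtain ⟨u, v, huv, hℓ⟩ := ℓ.exists_orthonormal_pair_span_eq hdim
  obtain ⟨hu₁, hv₁, -⟩ := orthonormal_pair_iff.mp huv
  have hu : u ∈ ℓ := hℓ ▸ subset_span (mem_insert u {v})
  rw [isAssociativePlane_iff]
  constructor
  · rintro ⟨w, hw, hwπ, hφ⟩
    rw [span_insert_E1_image hℓ] at hwπ
    have hsign := phi0Form.apply_eq_or_eq_neg_of_orthonormal (orthonormal_E1_toR7 huv) hw hwπ.symm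
    rw [hφ, phi0Form_E1_toR7] at hsign
    have hIu_norm : ‖Complex.I • u‖ = 1 := by rw [norm_I_smul, hu₁]
    have hv : v ∈ ℓ := hℓ ▸ subset_span (mem_insert_of_mem u rfl)
    have hIu : Complex.I • u ∈ ℓ := by
      rcases hsign with h | h
      · rw [(inner_eq_one_iff_of_norm_eq_one (𝕜 := ℝ) hIu_norm hv₁).mp h.symm]
        exact hv
      · rw [(inner_eq_neg_one_iff_of_norm_eq_one (𝕜 := ℝ) hIu_norm hv₁).mp (by linarith)]
        exact neg_mem hv
    rw [map_mulI_eq_self_iff, ← span_pair_I_smul_eq hdim hu hu₁ hIu]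
    exact fun x => I_smul_mem_span_pair_I_smul
  · intro hmap
    have hIu := (map_mulI_eq_self_iff ℓ).mp hmap u hu
    refine ⟨_, orthonormal_E1_toR7 (orthonormal_pair_I_smul hu₁),
      (span_insert_E1_image (span_pair_I_smul_eq hdim hu hu₁ hIu)).symm, ?_⟩
    rw [phi0Form_E1_toR7, real_inner_self_eq_norm_sq, norm_I_smul, hu₁, one_pow]
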